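/- In the one-to-one infection network system with r_1 > r_2 > ... > r_n: (a) if limsup_{t→∞} H_i(t) < 1/e_i then P_i(t) → 0; (b) if i < j, H_i(0) > 0, and limsup_{t→∞}(P_i(t) − P_j(t)) < r_i − r_j, then H_j(t) → 0. -/

import Mathlib

/-! Both parts are exponential decay estimates: if `f ≥ 0` and `f' + λ f ≤ 0` with `λ > 0`, then
`f(t) e^{λt}` is nonincreasing, so `f → 0`. For (a), eventually `H_i < b < 1/e_i`, hence
`P_i' ≤ -e_i ν_i (1/e_i - b) P_i`. For (b), `H_i` stays positive because its per-capita growth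
rate is bounded below, and `ψ = H_j / H_i` satisfies `ψ' / ψ = (r_j - r_i) - (P_j - P_i)`, which
is eventually below some `-λ < 0`; as `H_i` is bounded, `H_j = ψ H_i → 0`. -/

open Filter Finset Topology

/-- `Q̃_n = Σ_i a_i/e_i`. -/
noncomputable def QOIN (n : ℕ) (a e : ℕ → ℝ) : ℝ :=
  ∑ i ∈ Finset.range n, a i / e i

/-- `(h, p)` is an equilibrium of the one-to-one infection network system
`H_i' = H_i(r_i − Σ_j a_j H_j) − H_i P_i`, `P_i' = e_i n_i P_i(H_i − 1/e_i)`. -/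
def isEqOIN (n : ℕ) (r a e ν : ℕ → ℝ) (h p : ℕ → ℝ) : Prop :=
  (∀ i < n, h i * (r i - ∑ j ∈ Finset.range n, a j * h j) - h i * p i = 0) ∧
  (∀ i < n, e i * ν i * p i * (h i - 1 / e i) = 0)

/-- `(H, P)` solves the one-to-one infection network system for `t ≥ 0`. -/
def isSolOIN (n : ℕ) (r a e ν : ℕ → ℝ) (H P : ℝ → ℕ → ℝ) : Prop :=
  ∀ t ≥ (0:ℝ), ∀ i < n,
    HasDerivAt (fun s => H s i)
      (H t i * (r i - ∑ j ∈ Finset.range n, a j * H t j) - H t i * P t i) t ∧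
    HasDerivAt (fun s => P s i)
      (e i * ν i * P t i * (H t i - 1 / e i)) t


section ExpWeight

variable {f f' : ℝ → ℝ} {lam T : ℝ}

theorem antitoneOn_mul_exp_of_deriv_add_mul_nonpos
    (hf : ∀ t ≥ T, HasDerivAt f (f' t) t) (hle : ∀ t ≥ T, f' t + lam * f t ≤ 0) :
    AntitoneOn (fun t => f t * Real.exp (lam * t)) (Set.Ici T) := by
  have hg : ∀ t ≥ T, HasDerivAt (fun t => f t * Real.exp (lam * t))
      ((f' t + lam * f t) * Real.exp (lam * t)) t := fun t ht =>
    ((hf t ht).mul ((hasDerivAt_id t).const_mul lam).exp).congr_deriv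
      (by simp only [id, mul_one]; ring)
  refine antitoneOn_of_hasDerivWithinAt_nonpos (convex_Ici T)
    (f' := fun t => (f' t + lam * f t) * Real.exp (lam * t))
    (fun t ht => (hg t ht).continuousAt.continuousWithinAt) (fun t ht => ?_) (fun t ht => ?_)
  all_goals rw [interior_Ici] at ht
  · exact (hg t ht.le).hasDerivWithinAt
  · exact mul_nonpos_of_nonpos_of_nonneg (hle t ht.le) (Real.exp_pos _).le

theorem monotoneOn_mul_exp_of_deriv_add_mul_nonneg
    (hf : ∀ t ≥ T, HasDerivAt f (f' t) t) (hle : ∀ t ≥ T, 0 ≤ f' t + lam * f t) :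
    MonotoneOn (fun t => f t * Real.exp (lam * t)) (Set.Ici T) := by
  have hanti := antitoneOn_mul_exp_of_deriv_add_mul_nonpos (f := -f) (f' := -f') (lam := lam)
    (fun t ht => (hf t ht).neg) (fun t ht => by simp only [Pi.neg_apply]; linarith [hle t ht])
  intro x hx y hy hxy
  simpa only [Pi.neg_apply, neg_mul, neg_le_neg_iff] using hanti hx hy hxy

theorem tendsto_zero_of_deriv_add_mul_nonpos (hlam : 0 < lam)
    (hf : ∀ t ≥ T, HasDerivAt f (f' t) t) (hnn : ∀ t ≥ T, 0 ≤ f t)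
    (hle : ∀ t ≥ T, f' t + lam * f t ≤ 0) :
    Tendsto f atTop (𝓝 0) := by
  set C := f T * Real.exp (lam * T)
  have hbound : ∀ t ≥ T, f t ≤ C * Real.exp (-(lam * t)) := fun t ht => by
    rw [Real.exp_neg, ← div_eq_mul_inv, le_div_iff₀ (Real.exp_pos _)]
    exact antitoneOn_mul_exp_of_deriv_add_mul_nonpos hf hle Set.self_mem_Ici ht ht
  have hexp : Tendsto (fun t => C * Real.exp (-(lam * t))) atTop (𝓝 0) := by
    simpa using (Real.tendsto_exp_neg_atTop_nhds_zero.comp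
      (tendsto_id.const_mul_atTop hlam)).const_mul C
  exact squeeze_zero' (eventually_atTop.2 ⟨T, hnn⟩) (eventually_atTop.2 ⟨T, hbound⟩) hexp

end ExpWeight

theorem pos_of_hasDerivAt_eq_mul {f g : ℝ → ℝ} {M T : ℝ}
    (hf : ∀ t ≥ T, HasDerivAt f (f t * g t) t) (hnn : ∀ t ≥ T, 0 ≤ f t)
    (hg : ∀ t ≥ T, -M ≤ g t) (hT : 0 < f T) :
    ∀ t ≥ T, 0 < f t := fun t ht => by
  have hmono := monotoneOn_mul_exp_of_deriv_add_mul_nonneg (lam := M) hf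
    (fun s hs => by nlinarith [hnn s hs, hg s hs]) Set.self_mem_Ici ht ht
  exact (mul_pos_iff_of_pos_right (Real.exp_pos (M * t))).1
    (lt_of_lt_of_le (by positivity) hmono)

theorem tendsto_zero_of_hasDerivAt_eq_mul_sub {p h : ℝ → ℝ} {k θ T : ℝ} (hk : 0 < k)
    (hp : ∀ t ≥ T, HasDerivAt p (k * p t * (h t - θ)) t) (hnn : ∀ t ≥ T, 0 ≤ p t)
    (hbdd : IsBoundedUnder (· ≤ ·) atTop h) (hlim : limsup h atTop < θ) :
    Tendsto p atTop (𝓝 0) := by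
  obtain ⟨b, hLb, hbθ⟩ := exists_between hlim
  obtain ⟨T', hT'⟩ := eventually_atTop.1
    ((eventually_lt_of_limsup_lt hLb hbdd).and (eventually_ge_atTop T))
  refine tendsto_zero_of_deriv_add_mul_nonpos (mul_pos hk (sub_pos.2 hbθ))
    (fun t ht => hp t (hT' t ht).2) (fun t ht => hnn t (hT' t ht).2) (fun t ht => ?_)
  have hpt := hnn t (hT' t ht).2
  nlinarith [(hT' t ht).1, mul_nonneg hk.le hpt]

theorem tendsto_zero_of_hasDerivAt_of_rate_gap {u v g p q : ℝ → ℝ} {lam B T : ℝ}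
    (hlam : 0 < lam)
    (hu : ∀ t ≥ T, HasDerivAt u (u t * (g t + p t)) t)
    (hv : ∀ t ≥ T, HasDerivAt v (v t * (g t + q t)) t)
    (hu0 : ∀ t ≥ T, 0 ≤ u t) (hv0 : ∀ t ≥ T, 0 < v t) (hvB : ∀ t ≥ T, v t ≤ B)
    (hgap : ∀ t ≥ T, p t - q t ≤ -lam) :
    Tendsto u atTop (𝓝 0) := by
  have hψ0 : ∀ t ≥ T, 0 ≤ u t / v t := fun t ht => div_nonneg (hu0 t ht) (hv0 t ht).le
  have hψ : Tendsto (fun t => u t / v t) atTop (𝓝 0) := by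
    refine tendsto_zero_of_deriv_add_mul_nonpos (f' := fun t => u t / v t * (p t - q t)) hlam
      (fun t ht => ?_) hψ0 (fun t ht => by nlinarith [hψ0 t ht, hgap t ht])
    have hvt := (hv0 t ht).ne'
    exact ((hu t ht).div (hv t ht) hvt).congr_deriv (by field_simp; ring)
  refine squeeze_zero' (eventually_atTop.2 ⟨T, hu0⟩) (eventually_atTop.2 ⟨T, fun t ht => ?_⟩)
    (by simpa using hψ.const_mul B)
  calc u t = u t / v t * v t := (div_mul_cancel₀ _ (hv0 t ht).ne').symm
    _ ≤ u t / v t * B := mul_le_mul_of_nonneg_left (hvB t ht) (hψ0 t ht)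
    _ = B * (u t / v t) := mul_comm _ _

namespace isSolOIN

variable {n : ℕ} {r a e ν : ℕ → ℝ} {H P : ℝ → ℕ → ℝ} {B : ℝ}

theorem H_pos_of_H_zero_pos (hsol : isSolOIN n r a e ν H P) (ha : ∀ k < n, 0 ≤ a k)
    (hH : ∀ t ≥ (0:ℝ), ∀ k < n, 0 ≤ H t k) (hHB : ∀ t ≥ (0:ℝ), ∀ k < n, H t k ≤ B)
    {i : ℕ} (hi : i < n) (hPB : ∀ t ≥ (0:ℝ), P t i ≤ B) (hH0 : 0 < H 0 i) :
    ∀ t ≥ (0:ℝ), 0 < H t i := by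
  have hsum : ∀ t ≥ (0:ℝ), ∑ k ∈ range n, a k * H t k ≤ ∑ k ∈ range n, a k * B :=
    fun t ht => sum_le_sum fun k hk =>
      mul_le_mul_of_nonneg_left (hHB t ht k (mem_range.1 hk)) (ha k (mem_range.1 hk))
  refine pos_of_hasDerivAt_eq_mul (g := fun t => r i - ∑ k ∈ range n, a k * H t k - P t i)
    (M := ∑ k ∈ range n, a k * B + B - r i) (fun t ht => ?_) (fun t ht => hH t ht i hi)
    (fun t ht => ?_) hH0
  · exact (hsol t ht i hi).1.congr_deriv (by ring)
  · linarith [hsum t ht, hPB t ht]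

theorem tendsto_H_zero (hsol : isSolOIN n r a e ν H P) (ha : ∀ k < n, 0 ≤ a k)
    (hH : ∀ t ≥ (0:ℝ), ∀ k < n, 0 ≤ H t k) (hHB : ∀ t ≥ (0:ℝ), ∀ k < n, H t k ≤ B)
    {i j : ℕ} (hi : i < n) (hj : j < n) (hPi : ∀ t ≥ (0:ℝ), P t i ≤ B)
    (hPj : ∀ t ≥ (0:ℝ), 0 ≤ P t j) (hH0 : 0 < H 0 i)
    (hlim : limsup (fun t => P t i - P t j) atTop < r i - r j) :
    Tendsto (fun t => H t j) atTop (𝓝 0) := by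
  have hHi := hsol.H_pos_of_H_zero_pos ha hH hHB hi hPi hH0
  have hbdd : IsBoundedUnder (· ≤ ·) atTop (fun t => P t i - P t j) :=
    isBoundedUnder_of_eventually_le (a := B)
      (eventually_atTop.2 ⟨0, fun t ht => by linarith [hPi t ht, hPj t ht]⟩)
  obtain ⟨c, hLc, hc⟩ := exists_between hlim
  obtain ⟨T, hT⟩ := eventually_atTop.1
    ((eventually_lt_of_limsup_lt hLc hbdd).and (eventually_ge_atTop 0))
  have hderiv : ∀ k < n, ∀ t ≥ T, HasDerivAt (fun s => H s k)
      (H t k * (-∑ l ∈ range n, a l * H t l + (r k - P t k))) t :=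
    fun k hk t ht => (hsol t (hT t ht).2 k hk).1.congr_deriv (by ring)
  exact tendsto_zero_of_hasDerivAt_of_rate_gap (lam := r i - r j - c) (by linarith)
    (hderiv j hj) (hderiv i hi) (fun t ht => hH t (hT t ht).2 j hj)
    (fun t ht => hHi t (hT t ht).2) (fun t ht => hHB t (hT t ht).2 i hi)
    (fun t ht => by linarith [(hT t ht).1])

end isSolOIN

theorem statement16_general
    (n : ℕ) (r a e ν : ℕ → ℝ)
    (ha : ∀ i < n, 0 < a i)
    (he : ∀ i < n, 0 < e i) (hν : ∀ i < n, 0 < ν i)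
    (H P : ℝ → ℕ → ℝ) (hsol : isSolOIN n r a e ν H P)
    (hpos : ∀ t ≥ (0:ℝ), ∀ k < n, 0 ≤ H t k ∧ 0 ≤ P t k)
    (hbdd : ∃ B : ℝ, ∀ t ≥ (0:ℝ), ∀ k < n, H t k ≤ B ∧ P t k ≤ B) :
    (∀ i < n, Filter.limsup (fun t => H t i) Filter.atTop < 1 / e i →
      Filter.Tendsto (fun t => P t i) Filter.atTop (nhds 0)) ∧
    (∀ i j, i < j → j < n → 0 < H 0 i →
      Filter.limsup (fun t => P t i - P t j) Filter.atTop < r i - r j →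
      Filter.Tendsto (fun t => H t j) Filter.atTop (nhds 0)) := by
  obtain ⟨B, hB⟩ := hbdd
  refine ⟨fun i hi hlim => ?_, fun i j hij hj hH0 hlim => ?_⟩
  · exact tendsto_zero_of_hasDerivAt_eq_mul_sub (mul_pos (he i hi) (hν i hi))
      (fun t ht => (hsol t ht i hi).2) (fun t ht => (hpos t ht i hi).2)
      (isBoundedUnder_of_eventually_le (eventually_atTop.2 ⟨0, fun t ht => (hB t ht i hi).1⟩))
      hlim
  · have hi := hij.trans hj
    exact hsol.tendsto_H_zero (fun k hk => (ha k hk).le) (fun t ht k hk => (hpos t ht k hk).1)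
      (fun t ht k hk => (hB t ht k hk).1) hi hj (fun t ht => (hB t ht i hi).2)
      (fun t ht => (hpos t ht j hj).2) hH0 hlim

/-- in the one-to-one infection network system with `r_1 > ⋯ > r_n`:
(a) if `limsup H_i < 1/e_i` then `P_i → 0`; (b) if `i < j`, `H_i(0) > 0` and
`limsup (P_i − P_j) < r_i − r_j` then `H_j → 0`. -/
theorem statement16
    (n : ℕ) (r a e ν : ℕ → ℝ)
    (hr : ∀ i < n, 0 < r i) (ha : ∀ i < n, 0 < a i)
    (he : ∀ i < n, 0 < e i) (hν : ∀ i < n, 0 < ν i)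
    (hrord : ∀ i, i + 1 < n → r (i + 1) < r i)
    (H P : ℝ → ℕ → ℝ) (hsol : isSolOIN n r a e ν H P)
    (hpos : ∀ t ≥ (0:ℝ), ∀ k < n, 0 ≤ H t k ∧ 0 ≤ P t k)
    (hbdd : ∃ B : ℝ, ∀ t ≥ (0:ℝ), ∀ k < n, H t k ≤ B ∧ P t k ≤ B) :
    (∀ i < n, Filter.limsup (fun t => H t i) Filter.atTop < 1 / e i →
      Filter.Tendsto (fun t => P t i) Filter.atTop (nhds 0)) ∧
    (∀ i j, i < j → j < n → 0 < H 0 i →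
      Filter.limsup (fun t => P t i - P t j) Filter.atTop < r i - r j →
      Filter.Tendsto (fun t => H t j) Filter.atTop (nhds 0)) :=
  statement16_general n r a e ν ha he hν H P hsol hpos hbdd
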